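/- Let S be a finite set of states of a turn-based stochastic game and T ⊆ S a nonempty end component such that the Minimizer can guarantee the play stays in T forever (i.e., T has no Maximizer state with an action leaving T, and every Minimizer state in T has some action staying in T). If T contains no target state, then V(s) = 0 for every s ∈ T. -/
import Mathlib


/-- `reachB δ F isMax σ τ k h s` : probability of reaching the target set `F` within `k`
steps in the turn-based stochastic game with transition function `δ`, starting from state
`s` after history `h`, when Maximizer plays the (history-dependent) strategy `σ` and
Minimizer plays `τ`. -/
noncomputable def reachB {S A : Type} [Fintype S] [DecidableEq S]
    (δ : S → A → S → ℝ) (F : Finset S) (isMax : S → Bool)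
    (σ τ : List (S × A) → S → A) : ℕ → List (S × A) → S → ℝ
  | 0, _, s => if s ∈ F then 1 else 0
  | k + 1, h, s =>
      if s ∈ F then 1
      else
        ∑ s' : S,
          δ s (if isMax s then σ h s else τ h s) s' *
            reachB δ F isMax σ τ k (h ++ [(s, if isMax s then σ h s else τ h s)]) s'

/-- `stayB δ SQ isMax σ τ k h s` : probability that the play remains in the unknown set
`SQ` during the first `k` steps. -/
noncomputable def stayB {S A : Type} [Fintype S] [DecidableEq S]
    (δ : S → A → S → ℝ) (SQ : Finset S) (isMax : S → Bool)
    (σ τ : List (S × A) → S → A) : ℕ → List (S × A) → S → ℝ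
  | 0, _, s => if s ∈ SQ then 1 else 0
  | k + 1, h, s =>
      if s ∈ SQ then
        ∑ s' : S,
          δ s (if isMax s then σ h s else τ h s) s' *
            stayB δ SQ isMax σ τ k (h ++ [(s, if isMax s then σ h s else τ h s)]) s'
      else 0

/-- History-dependent strategies respecting the available actions `Av`. -/
def Strat {S A : Type} (Av : S → Finset A) : Type :=
  {f : List (S × A) → S → A // ∀ h s, f h s ∈ Av s}

/-- `pReach δ F isMax σ τ s = P_s^{σ,τ}(◇F)`, the probability of eventually reaching `F`,
as the supremum of the step-bounded reachability probabilities. -/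
noncomputable def pReach {S A : Type} [Fintype S] [DecidableEq S]
    (δ : S → A → S → ℝ) (F : Finset S) (isMax : S → Bool)
    (σ τ : List (S × A) → S → A) (s : S) : ℝ :=
  ⨆ k : ℕ, reachB δ F isMax σ τ k [] s

/-- The value `V(s) = sup_σ inf_τ P_s^{σ,τ}(◇F)` of the reachability game. -/
noncomputable def gameValue {S A : Type} [Fintype S] [DecidableEq S]
    (δ : S → A → S → ℝ) (Av : S → Finset A) (F : Finset S) (isMax : S → Bool)
    (s : S) : ℝ :=
  ⨆ σ : Strat Av, ⨅ τ : Strat Av, pReach δ F isMax σ.1 τ.1 s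

lemma reachB_nonneg' {S A : Type} [Fintype S] [DecidableEq S]
    (δ : S → A → S → ℝ) (F : Finset S) (isMax : S → Bool)
    (σ τ : List (S × A) → S → A) (hδ0 : ∀ s a s', 0 ≤ δ s a s') :
    ∀ k h s, 0 ≤ reachB δ F isMax σ τ k h s := by
  intro k
  induction k with
  | zero =>
    intro h s
    rw [reachB]
    split <;> norm_num
  | succ k ih =>
    intro h s
    rw [reachB]
    split
    · norm_num
    · exact Finset.sum_nonneg fun s' _ => mul_nonneg (hδ0 _ _ _) (ih _ _)

/-- Trap end components have value 0: if `T` is a nonempty set of states in which the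
Minimizer can force the play to stay forever (no Maximizer state of `T` has an action
leaving `T`, and every Minimizer state of `T` has some available action staying in `T`),
and `T` contains no target state, then `V(s) = 0` for every `s ∈ T`. -/
theorem stmt9 {S A : Type} [Fintype S] [DecidableEq S]
    (δ : S → A → S → ℝ) (Av : S → Finset A) (isMax : S → Bool)
    (F : Finset S)
    (hδ0 : ∀ s a s', 0 ≤ δ s a s')
    (hδ1 : ∀ s, ∀ a ∈ Av s, ∑ s' : S, δ s a s' = 1)
    (hAv : ∀ s, (Av s).Nonempty)
    (T : Finset S) (hTne : T.Nonempty)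
    (hMax : ∀ s ∈ T, isMax s = true →
      ∀ a ∈ Av s, ∀ s' : S, δ s a s' ≠ 0 → s' ∈ T)
    (hMin : ∀ s ∈ T, isMax s = false →
      ∃ a ∈ Av s, ∀ s' : S, δ s a s' ≠ 0 → s' ∈ T)
    (hTF : ∀ s ∈ T, s ∉ F) :
    ∀ s ∈ T, gameValue δ Av F isMax s = 0 := by
  classical
  intro s hs
  have hNE : Nonempty (Strat Av) :=
    ⟨⟨fun _ s => (hAv s).choose, fun _ s => (hAv s).choose_spec⟩⟩
  -- Minimizer's trap action
  set m : S → A := fun s =>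
    if h : isMax s = false ∧ s ∈ T then (hMin s h.2 h.1).choose else (hAv s).choose
    with hm
  have hmAv : ∀ s, m s ∈ Av s := by
    intro s
    simp only [hm]
    by_cases h : isMax s = false ∧ s ∈ T
    · rw [dif_pos h]; exact (hMin s h.2 h.1).choose_spec.1
    · rw [dif_neg h]; exact (hAv s).choose_spec
  have hmStay : ∀ s, isMax s = false → s ∈ T → ∀ s', δ s (m s) s' ≠ 0 → s' ∈ T := by
    intro s h1 h2 s' hd
    simp only [hm] at hd
    rw [dif_pos ⟨h1, h2⟩] at hd
    exact (hMin s h2 h1).choose_spec.2 s' hd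
  set τstar : Strat Av := ⟨fun _ s => m s, fun _ s => hmAv s⟩ with hτ
  -- key: against τstar, reachB is 0 inside T
  have key : ∀ (σ : List (S × A) → S → A) (_ : ∀ h s, σ h s ∈ Av s),
      ∀ k h t, t ∈ T → reachB δ F isMax σ (fun _ s => m s) k h t = 0 := by
    intro σ hσ k
    induction k with
    | zero =>
      intro h t ht
      rw [reachB, if_neg (hTF t ht)]
    | succ k ih =>
      intro h t ht
      rw [reachB, if_neg (hTF t ht)]
      apply Finset.sum_eq_zero
      intro s' _
      by_cases hd : δ t (if isMax t then σ h t else m t) s' = 0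
      · rw [hd, zero_mul]
      · have hs'T : s' ∈ T := by
          cases hb : isMax t with
          | true =>
            simp only [hb, if_true] at hd
            exact hMax t ht hb (σ h t) (hσ h t) s' hd
          | false =>
            simp only [hb, Bool.false_eq_true, if_false] at hd
            exact hmStay t hb ht s' hd
        rw [ih _ s' hs'T, mul_zero]
  -- pReach against τstar is 0
  have hpReach0 : ∀ σ : Strat Av, pReach δ F isMax σ.1 τstar.1 s = 0 := by
    intro σ
    have h0 : ∀ k, reachB δ F isMax σ.1 τstar.1 k [] s = 0 := fun k =>
      key σ.1 σ.2 k [] s hs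
    simp only [pReach, h0, ciSup_const]
  -- pReach is always nonnegative
  have hpnn : ∀ (σ τ : Strat Av) (t : S), 0 ≤ pReach δ F isMax σ.1 τ.1 t := by
    intro σ τ t
    exact Real.iSup_nonneg fun k => reachB_nonneg' δ F isMax σ.1 τ.1 hδ0 k [] t
  have hinf : ∀ σ : Strat Av, (⨅ τ : Strat Av, pReach δ F isMax σ.1 τ.1 s) = 0 := by
    intro σ
    apply le_antisymm
    · calc (⨅ τ : Strat Av, pReach δ F isMax σ.1 τ.1 s)
          ≤ pReach δ F isMax σ.1 τstar.1 s :=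
            ciInf_le ⟨0, by rintro x ⟨τ, rfl⟩; exact hpnn σ τ s⟩ τstar
        _ = 0 := hpReach0 σ
    · exact le_ciInf fun τ => hpnn σ τ s
  simp only [gameValue, hinf, ciSup_const]
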